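/- (Concavity lemma used in the proof of Proposition 4.2.) Let 0 ≤ P ≤ 4. The function z ↦ Real.log (1/2 + (1/2)·erf(√z − √(P/2))) is concave on [0, ∞) (ConcaveOn ℝ (Set.Ici 0) of this function). -/

import Mathlib

/-! Write `G w = ∫_{-∞}^w exp (-t ^ 2) = √π (1/2 + erf w / 2)`. For `w < 0`, comparing
`exp (-t ^ 2)` with `(t / w) * exp (-t ^ 2)` on `(-∞, w]` gives the Mills-type bound
`-2w G(w) ≤ exp (-w ^ 2)`. This is exactly the sign condition making
`(log G)'' = G'(-2w G - G') / G²` nonpositive, so `log G` is concave; being also increasing,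
it stays concave after composition with the concave map `z ↦ √z - √(P/2)`. -/

open MeasureTheory ProbabilityTheory Real Set

noncomputable def erf (x : ℝ) : ℝ :=
  (2 / Real.sqrt Real.pi) * ∫ t in (0:ℝ)..x, Real.exp (-t^2)

open Filter Topology

theorem ConcaveOn.comp_of_monotone {𝕜 E β γ : Type*} [Semiring 𝕜] [PartialOrder 𝕜]
    [AddCommMonoid E] [AddCommMonoid β] [AddCommMonoid γ] [PartialOrder β] [PartialOrder γ]
    [SMul 𝕜 E] [SMul 𝕜 β] [SMul 𝕜 γ] {s : Set E} {f : E → β} {g : β → γ}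
    (hg : ConcaveOn 𝕜 univ g) (hg' : Monotone g) (hf : ConcaveOn 𝕜 s f) :
    ConcaveOn 𝕜 s (g ∘ f) :=
  ⟨hf.1, fun _ hx _ hy _ _ ha hb hab =>
    (hg.2 trivial trivial ha hb hab).trans (hg' (hf.2 hx hy ha hb hab))⟩

lemma integrable_exp_neg_sq : Integrable fun t : ℝ => exp (-t ^ 2) := by
  simpa using integrable_exp_neg_mul_sq one_pos

lemma hasDerivAt_erf (w : ℝ) : HasDerivAt erf (2 / √π * exp (-w ^ 2)) w :=
  ((by fun_prop : Continuous fun t : ℝ => exp (-t ^ 2)).integral_hasStrictDerivAt 0 w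
    |>.hasDerivAt).const_mul _

lemma erf_strictMono : StrictMono erf :=
  strictMono_of_deriv_pos fun w => (hasDerivAt_erf w).deriv ▸ by positivity

lemma integral_Iic_zero_exp_neg_sq : ∫ t in Iic (0 : ℝ), exp (-t ^ 2) = √π / 2 := by
  have h := integral_comp_neg_Iic 0 fun t : ℝ => exp (-t ^ 2)
  simp only [neg_sq, neg_zero] at h
  simpa [h] using integral_gaussian_Ioi 1

lemma tendsto_exp_neg_sq_atBot : Tendsto (fun t : ℝ => exp (-t ^ 2)) atBot (𝓝 0) := by
  have : Tendsto (fun t : ℝ => t ^ 2) atBot atTop := by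
    simpa [Function.comp_def] using
      (tendsto_pow_atTop two_ne_zero).comp (tendsto_neg_atBot_atTop (G := ℝ))
  exact Real.tendsto_exp_atBot.comp (tendsto_neg_atTop_atBot.comp this)

lemma half_add_half_mul_erf (w : ℝ) :
    1 / 2 + 1 / 2 * erf w = (∫ t in Iic w, exp (-t ^ 2)) / √π := by
  have hint := integrable_exp_neg_sq.integrableOn (s := Iic 0)
  rw [erf, ← intervalIntegral.integral_Iic_sub_Iic hint integrable_exp_neg_sq.integrableOn,
    integral_Iic_zero_exp_neg_sq]
  field_simp
  ring

lemma integral_Iic_exp_neg_sq_pos (w : ℝ) : 0 < ∫ t in Iic w, exp (-t ^ 2) := by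
  rw [setIntegral_pos_iff_support_of_nonneg_ae (.of_forall fun t => (exp_pos _).le)
    integrable_exp_neg_sq.integrableOn]
  simp [Function.support, (exp_pos _).ne']

lemma integral_Iic_mul_exp_neg_sq (w : ℝ) :
    ∫ t in Iic w, t * exp (-t ^ 2) = -exp (-w ^ 2) / 2 := by
  have hderiv : ∀ t ∈ Iic w,
      HasDerivAt (fun t : ℝ => -exp (-t ^ 2) / 2) (t * exp (-t ^ 2)) t := fun t _ => by
    refine ((hasDerivAt_pow 2 t).fun_neg.exp.fun_neg.div_const 2).congr_deriv ?_
    norm_num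
    ring
  have hint : Integrable fun t : ℝ => t * exp (-t ^ 2) := by
    simpa using integrable_mul_exp_neg_mul_sq one_pos
  simpa using integral_Iic_of_hasDerivAt_of_tendsto' hderiv hint.integrableOn
    (by simpa using tendsto_exp_neg_sq_atBot.neg.div_const 2) |>.trans (sub_zero _)

lemma neg_two_mul_mul_integral_Iic_exp_neg_sq_le (w : ℝ) :
    -(2 * w) * ∫ t in Iic w, exp (-t ^ 2) ≤ exp (-w ^ 2) := by
  rcases le_or_gt 0 w with hw | hw
  · exact (mul_nonpos_of_nonpos_of_nonneg (by linarith)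
      (integral_Iic_exp_neg_sq_pos w).le).trans (exp_pos _).le
  have hint : Integrable fun t : ℝ => w⁻¹ * (t * exp (-t ^ 2)) := by
    simpa using (integrable_mul_exp_neg_mul_sq one_pos).const_mul w⁻¹
  have hle : ∫ t in Iic w, exp (-t ^ 2) ≤ ∫ t in Iic w, w⁻¹ * (t * exp (-t ^ 2)) := by
    refine setIntegral_mono_on integrable_exp_neg_sq.integrableOn hint.integrableOn
      measurableSet_Iic fun t ht => ?_
    rw [← mul_assoc, ← div_eq_inv_mul]
    exact le_mul_of_one_le_left (exp_pos _).le ((one_le_div_of_neg hw).2 ht)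
  calc -(2 * w) * ∫ t in Iic w, exp (-t ^ 2)
      ≤ -(2 * w) * ∫ t in Iic w, w⁻¹ * (t * exp (-t ^ 2)) := by gcongr; linarith
    _ = exp (-w ^ 2) := by
      rw [integral_const_mul, integral_Iic_mul_exp_neg_sq]
      field_simp [hw.ne]

lemma half_add_half_mul_erf_pos (w : ℝ) : 0 < 1 / 2 + 1 / 2 * erf w := by
  rw [half_add_half_mul_erf]
  exact div_pos (integral_Iic_exp_neg_sq_pos w) (by positivity)

lemma neg_two_mul_mul_half_add_half_mul_erf_le (w : ℝ) :
    -(2 * w) * (1 / 2 + 1 / 2 * erf w) ≤ exp (-w ^ 2) / √π := by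
  rw [half_add_half_mul_erf, mul_div_assoc']
  gcongr
  exact neg_two_mul_mul_integral_Iic_exp_neg_sq_le w

lemma concaveOn_log_half_add_half_mul_erf :
    ConcaveOn ℝ univ fun w => log (1 / 2 + 1 / 2 * erf w) := by
  set F : ℝ → ℝ := fun w => 1 / 2 + 1 / 2 * erf w
  set φ : ℝ → ℝ := fun w => exp (-w ^ 2) / √π
  have hF : ∀ w, HasDerivAt F (φ w) w := fun w => by
    refine (((hasDerivAt_erf w).const_mul (1 / 2)).const_add (1 / 2)).congr_deriv ?_
    simp only [φ]
    ring
  have hφ : ∀ w, HasDerivAt φ (-(2 * w) * φ w) w := fun w => by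
    refine ((hasDerivAt_pow 2 w).fun_neg.exp.div_const √π).congr_deriv ?_
    norm_num
    ring
  have hlogF : ∀ w, HasDerivAt (fun w => log (F w)) (φ w / F w) w := fun w =>
    (hF w).log (half_add_half_mul_erf_pos w).ne'
  have hlogF' : ∀ w, HasDerivAt (fun w => φ w / F w)
      ((-(2 * w) * φ w * F w - φ w * φ w) / F w ^ 2) w := fun w =>
    (hφ w).div (hF w) (half_add_half_mul_erf_pos w).ne'
  refine concaveOn_of_hasDerivWithinAt2_nonpos convex_univ
    (fun w _ => (hlogF w).continuousAt.continuousWithinAt)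
    (fun w _ => (hlogF w).hasDerivWithinAt) (fun w _ => (hlogF' w).hasDerivWithinAt)
    fun w _ => div_nonpos_of_nonpos_of_nonneg ?_ (sq_nonneg _)
  have hmills : -(2 * w) * F w ≤ φ w := neg_two_mul_mul_half_add_half_mul_erf_le w
  rw [show -(2 * w) * φ w * F w - φ w * φ w = φ w * (-(2 * w) * F w - φ w) by ring]
  exact mul_nonpos_of_nonneg_of_nonpos (by positivity) (sub_nonpos.2 hmills)

lemma monotone_log_half_add_half_mul_erf : Monotone fun w => log (1 / 2 + 1 / 2 * erf w) :=
  fun a b hab => log_le_log (half_add_half_mul_erf_pos a) <| by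
    gcongr; exact erf_strictMono.monotone hab

theorem stmt_12_general (P : ℝ) :
    ConcaveOn ℝ (Set.Ici 0)
      (fun z : ℝ => Real.log (1/2 + (1/2) * erf (Real.sqrt z - Real.sqrt (P/2)))) := by
  have hsqrt : ConcaveOn ℝ (Ici 0) fun z => √z - √(P / 2) :=
    strictConcaveOn_sqrt.concaveOn.sub (convexOn_const _ (convex_Ici 0))
  exact concaveOn_log_half_add_half_mul_erf.comp_of_monotone
    monotone_log_half_add_half_mul_erf hsqrt

theorem stmt_12 (P : ℝ) (hP0 : 0 ≤ P) (hP4 : P ≤ 4) :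
    ConcaveOn ℝ (Set.Ici 0)
      (fun z : ℝ => Real.log (1/2 + (1/2) * erf (Real.sqrt z - Real.sqrt (P/2)))) :=
  stmt_12_general P
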